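/- arXiv:1602.02602 — 3 statements merged into one kernel-verified Lean document; each statement's English description precedes it below -/
import Mathlib

section
/- Let G be an ample groupoid such that G⁰ is σ-compact, and suppose that K ⊆ G⁰ is clopen and G-full. Then there is a sequence (V_i)_{i=1}^∞ of compact open bisections V_i ⊆ GK with mutually disjoint ranges such that the disjoint union ⨆_i r(V_i) equals G⁰. -/
universe u v w

/-- An (algebraic) groupoid structure on a type `G` of arrows.  The multiplication is a total
function, but all axioms involving `mul a b` are only imposed when `a` and `b` are composable,
i.e. when `src a = rng b`.  Units are the common values of `src` and `rng`. -/
structure GroupoidStruct (G : Type u) where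
  src : G → G
  rng : G → G
  mul : G → G → G
  inv : G → G
  src_src : ∀ a, src (src a) = src a
  rng_src : ∀ a, rng (src a) = src a
  src_rng : ∀ a, src (rng a) = rng a
  rng_rng : ∀ a, rng (rng a) = rng a
  mul_assoc : ∀ a b c, src a = rng b → src b = rng c → mul (mul a b) c = mul a (mul b c)
  src_mul : ∀ a b, src a = rng b → src (mul a b) = src b
  rng_mul : ∀ a b, src a = rng b → rng (mul a b) = rng a
  mul_src : ∀ a, mul a (src a) = a
  rng_mul_self : ∀ a, mul (rng a) a = a
  src_inv : ∀ a, src (inv a) = rng a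
  rng_inv : ∀ a, rng (inv a) = src a
  mul_inv : ∀ a, mul a (inv a) = rng a
  inv_mul : ∀ a, mul (inv a) a = src a

namespace GroupoidStruct

variable {G : Type u} {H : Type v}

/-- The unit space `G⁰` of a groupoid. -/
def units (S : GroupoidStruct G) : Set G := {x | S.src x = x ∧ S.rng x = x}

/-- The range map, viewed as a map `G → G⁰`. -/
def rngMap (S : GroupoidStruct G) (g : G) : S.units := ⟨S.rng g, S.src_rng g, S.rng_rng g⟩

/-- The source map, viewed as a map `G → G⁰`. -/
def srcMap (S : GroupoidStruct G) (g : G) : S.units := ⟨S.src g, S.src_src g, S.rng_src g⟩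

/-- A topological groupoid: inversion is continuous and multiplication is continuous on the
set of composable pairs. -/
structure IsTopologicalGroupoid [TopologicalSpace G] (S : GroupoidStruct G) : Prop where
  continuous_inv : Continuous S.inv
  continuousOn_mul :
    ContinuousOn (fun p : G × G => S.mul p.1 p.2) {p : G × G | S.src p.1 = S.rng p.2}

/-- An ample groupoid: a topological groupoid whose topology has a basis of compact open sets,
whose unit space is Hausdorff, and whose range and source maps are local homeomorphisms onto
the unit space. -/
structure IsAmple [TopologicalSpace G] (S : GroupoidStruct G)
    extends IsTopologicalGroupoid S : Prop where
  compact_open_basis : ∃ B : Set (Set G),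
    (∀ U ∈ B, IsCompact U ∧ IsOpen U) ∧ TopologicalSpace.IsTopologicalBasis B
  t2_units : T2Space S.units
  isLocalHomeomorph_rngMap : IsLocalHomeomorph S.rngMap
  isLocalHomeomorph_srcMap : IsLocalHomeomorph S.srcMap

/-- `K ⊆ G⁰` is `G`-full if `r(GK) = G⁰`, where `GK = s⁻¹(K)`. -/
def IsFull (S : GroupoidStruct G) (K : Set G) : Prop := S.rng '' (S.src ⁻¹' K) = S.units

/-- `K` is an open subset of the unit space (in the subspace topology of `G⁰`). -/
def IsUnitOpen [TopologicalSpace G] (S : GroupoidStruct G) (K : Set G) : Prop :=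
  K ⊆ S.units ∧ IsOpen {x : S.units | (x : G) ∈ K}

/-- `K` is a clopen subset of the unit space (in the subspace topology of `G⁰`). -/
def IsUnitClopen [TopologicalSpace G] (S : GroupoidStruct G) (K : Set G) : Prop :=
  K ⊆ S.units ∧ IsClopen {x : S.units | (x : G) ∈ K}

/-- `K` is a compact open subset of the unit space. -/
def IsUnitCompactOpen [TopologicalSpace G] (S : GroupoidStruct G) (K : Set G) : Prop :=
  K ⊆ S.units ∧ IsCompact K ∧ IsOpen {x : S.units | (x : G) ∈ K}

/-- An open bisection: an open set on which both the range and the source map restrict to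
homeomorphisms onto their images (i.e. are topological embeddings). -/
def IsOpenBisection [TopologicalSpace G] (S : GroupoidStruct G) (U : Set G) : Prop :=
  IsOpen U ∧ Topology.IsEmbedding (U.restrict S.rng) ∧ Topology.IsEmbedding (U.restrict S.src)

/-- A compact open bisection. -/
def IsCompactOpenBisection [TopologicalSpace G] (S : GroupoidStruct G) (U : Set G) : Prop :=
  IsCompact U ∧ S.IsOpenBisection U

/-- The product of two groupoids, with coordinatewise operations. -/
def prod (S : GroupoidStruct G) (T : GroupoidStruct H) : GroupoidStruct (G × H) where
  src p := (S.src p.1, T.src p.2)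
  rng p := (S.rng p.1, T.rng p.2)
  mul p q := (S.mul p.1 q.1, T.mul p.2 q.2)
  inv p := (S.inv p.1, T.inv p.2)
  src_src a := Prod.ext_iff.mpr ⟨S.src_src _, T.src_src _⟩
  rng_src a := Prod.ext_iff.mpr ⟨S.rng_src _, T.rng_src _⟩
  src_rng a := Prod.ext_iff.mpr ⟨S.src_rng _, T.src_rng _⟩
  rng_rng a := Prod.ext_iff.mpr ⟨S.rng_rng _, T.rng_rng _⟩
  mul_assoc a b c h1 h2 := by
    obtain ⟨h1a, h1b⟩ := Prod.ext_iff.mp h1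
    obtain ⟨h2a, h2b⟩ := Prod.ext_iff.mp h2
    exact Prod.ext_iff.mpr ⟨S.mul_assoc _ _ _ h1a h2a, T.mul_assoc _ _ _ h1b h2b⟩
  src_mul a b h := by
    obtain ⟨ha, hb⟩ := Prod.ext_iff.mp h
    exact Prod.ext_iff.mpr ⟨S.src_mul _ _ ha, T.src_mul _ _ hb⟩
  rng_mul a b h := by
    obtain ⟨ha, hb⟩ := Prod.ext_iff.mp h
    exact Prod.ext_iff.mpr ⟨S.rng_mul _ _ ha, T.rng_mul _ _ hb⟩
  mul_src a := Prod.ext_iff.mpr ⟨S.mul_src _, T.mul_src _⟩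
  rng_mul_self a := Prod.ext_iff.mpr ⟨S.rng_mul_self _, T.rng_mul_self _⟩
  src_inv a := Prod.ext_iff.mpr ⟨S.src_inv _, T.src_inv _⟩
  rng_inv a := Prod.ext_iff.mpr ⟨S.rng_inv _, T.rng_inv _⟩
  mul_inv a := Prod.ext_iff.mpr ⟨S.mul_inv _, T.mul_inv _⟩
  inv_mul a := Prod.ext_iff.mpr ⟨S.inv_mul _, T.inv_mul _⟩

/-- The full equivalence relation `ℛ = ℕ × ℕ`, regarded as a (discrete, principal) groupoid
with unit space `ℕ`. -/
def Rho : GroupoidStruct (ℕ × ℕ) where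
  src p := (p.2, p.2)
  rng p := (p.1, p.1)
  mul p q := (p.1, q.2)
  inv p := (p.2, p.1)
  src_src _ := rfl
  rng_src _ := rfl
  src_rng _ := rfl
  rng_rng _ := rfl
  mul_assoc _ _ _ _ _ := rfl
  src_mul _ _ _ := rfl
  rng_mul _ _ _ := rfl
  mul_src _ := rfl
  rng_mul_self _ := rfl
  src_inv _ := rfl
  rng_inv _ := rfl
  mul_inv _ := rfl
  inv_mul _ := rfl

/-- An isomorphism of topological groupoids: a homeomorphism of the arrow spaces respecting
all the groupoid operations. -/
structure GroupoidIso [TopologicalSpace G] [TopologicalSpace H]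
    (S : GroupoidStruct G) (T : GroupoidStruct H) extends G ≃ₜ H where
  map_mul : ∀ a b, S.src a = S.rng b →
    toHomeomorph (S.mul a b) = T.mul (toHomeomorph a) (toHomeomorph b)
  map_inv : ∀ a, toHomeomorph (S.inv a) = T.inv (toHomeomorph a)
  map_src : ∀ a, toHomeomorph (S.src a) = T.src (toHomeomorph a)
  map_rng : ∀ a, toHomeomorph (S.rng a) = T.rng (toHomeomorph a)

/-- The arrow space `G|_K = r⁻¹(K) ∩ s⁻¹(K)` of the restriction of `G` to `K ⊆ G⁰`,
with the subspace topology. -/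
abbrev Restrict (S : GroupoidStruct G) (K : Set G) : Type u :=
  {g : G // S.rng g ∈ K ∧ S.src g ∈ K}

variable (S : GroupoidStruct G) (K : Set G)

def rsrc (a : S.Restrict K) : S.Restrict K :=
  ⟨S.src a.1, by rw [S.rng_src]; exact a.2.2, by rw [S.src_src]; exact a.2.2⟩

def rrng (a : S.Restrict K) : S.Restrict K :=
  ⟨S.rng a.1, by rw [S.rng_rng]; exact a.2.1, by rw [S.src_rng]; exact a.2.1⟩

def rinv (a : S.Restrict K) : S.Restrict K :=
  ⟨S.inv a.1, by rw [S.rng_inv]; exact a.2.2, by rw [S.src_inv]; exact a.2.1⟩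

open Classical in
noncomputable def rmul (a b : S.Restrict K) : S.Restrict K :=
  if h : S.src a.1 = S.rng b.1 then
    ⟨S.mul a.1 b.1, by rw [S.rng_mul _ _ h]; exact a.2.1, by rw [S.src_mul _ _ h]; exact b.2.2⟩
  else a

@[simp] lemma rsrc_val (a : S.Restrict K) : (S.rsrc K a).1 = S.src a.1 := rfl
@[simp] lemma rrng_val (a : S.Restrict K) : (S.rrng K a).1 = S.rng a.1 := rfl
@[simp] lemma rinv_val (a : S.Restrict K) : (S.rinv K a).1 = S.inv a.1 := rfl

lemma rmul_val (a b : S.Restrict K) (h : S.src a.1 = S.rng b.1) :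
    (S.rmul K a b).1 = S.mul a.1 b.1 := by
  unfold rmul
  rw [dif_pos h]

/-- The restriction `G|_K` of a groupoid to a subset `K` of its unit space. -/
noncomputable def restrict : GroupoidStruct (S.Restrict K) where
  src := S.rsrc K
  rng := S.rrng K
  mul := S.rmul K
  inv := S.rinv K
  src_src a := Subtype.ext (S.src_src a.1)
  rng_src a := Subtype.ext (S.rng_src a.1)
  src_rng a := Subtype.ext (S.src_rng a.1)
  rng_rng a := Subtype.ext (S.rng_rng a.1)
  mul_assoc a b c h1 h2 := by
    have h1' : S.src a.1 = S.rng b.1 := congrArg Subtype.val h1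
    have h2' : S.src b.1 = S.rng c.1 := congrArg Subtype.val h2
    have hab := S.rmul_val K a b h1'
    have hbc := S.rmul_val K b c h2'
    apply Subtype.ext
    calc (S.rmul K (S.rmul K a b) c).1
        = S.mul (S.rmul K a b).1 c.1 :=
          S.rmul_val K _ _ (by rw [hab, S.src_mul _ _ h1']; exact h2')
      _ = S.mul (S.mul a.1 b.1) c.1 := by rw [hab]
      _ = S.mul a.1 (S.mul b.1 c.1) := S.mul_assoc _ _ _ h1' h2'
      _ = S.mul a.1 (S.rmul K b c).1 := by rw [hbc]
      _ = (S.rmul K a (S.rmul K b c)).1 :=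
          (S.rmul_val K _ _ (by rw [hbc, S.rng_mul _ _ h2']; exact h1')).symm
  src_mul a b h := by
    have h' : S.src a.1 = S.rng b.1 := congrArg Subtype.val h
    apply Subtype.ext
    show S.src (S.rmul K a b).1 = S.src b.1
    rw [S.rmul_val K a b h', S.src_mul _ _ h']
  rng_mul a b h := by
    have h' : S.src a.1 = S.rng b.1 := congrArg Subtype.val h
    apply Subtype.ext
    show S.rng (S.rmul K a b).1 = S.rng a.1
    rw [S.rmul_val K a b h', S.rng_mul _ _ h']
  mul_src a := by
    apply Subtype.ext
    rw [S.rmul_val K a _ (by rw [rsrc_val, S.rng_src]), rsrc_val]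
    exact S.mul_src a.1
  rng_mul_self a := by
    apply Subtype.ext
    rw [S.rmul_val K _ a (by rw [rrng_val, S.src_rng]), rrng_val]
    exact S.rng_mul_self a.1
  src_inv a := Subtype.ext (S.src_inv a.1)
  rng_inv a := Subtype.ext (S.rng_inv a.1)
  mul_inv a := by
    apply Subtype.ext
    rw [S.rmul_val K a _ (by rw [rinv_val, S.rng_inv]), rinv_val]
    exact S.mul_inv a.1
  inv_mul a := by
    apply Subtype.ext
    rw [S.rmul_val K _ a (by rw [rinv_val, S.src_inv]), rinv_val]
    exact S.inv_mul a.1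

variable {S K}

/-- The data of a groupoid equivalence between `G` and `H`: a space `Z` carrying commuting
free and proper continuous actions of `G` (on the left) and `H` (on the right), whose anchor
maps `ρ : Z → G⁰` and `σ : Z → H⁰` induce homeomorphisms `Z/H ≅ G⁰` and `G\Z ≅ H⁰`.
The latter conditions are encoded by requiring that the fibres of `ρ` are exactly the
`H`-orbits, that `ρ` is surjective onto `G⁰`, and that `ρ` is a topological quotient map onto
`G⁰` (and symmetrically for `σ`): this says precisely that the induced map `Z/H → G⁰` is a
homeomorphism. -/
structure GroupoidEquivalenceData [TopologicalSpace G] [TopologicalSpace H]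
    (S : GroupoidStruct G) (T : GroupoidStruct H) (Z : Type w) [TopologicalSpace Z] where
  ρ : Z → G
  σ : Z → H
  ρ_unit : ∀ z, ρ z ∈ S.units
  σ_unit : ∀ z, σ z ∈ T.units
  continuous_ρ : Continuous ρ
  continuous_σ : Continuous σ
  actL : G → Z → Z
  actR : Z → H → Z
  ρ_actL : ∀ g z, S.src g = ρ z → ρ (actL g z) = S.rng g
  σ_actL : ∀ g z, S.src g = ρ z → σ (actL g z) = σ z
  actL_unit : ∀ z, actL (ρ z) z = z
  actL_mul : ∀ g g' z, S.src g = S.rng g' → S.src g' = ρ z →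
    actL (S.mul g g') z = actL g (actL g' z)
  σ_actR : ∀ z h, σ z = T.rng h → σ (actR z h) = T.src h
  ρ_actR : ∀ z h, σ z = T.rng h → ρ (actR z h) = ρ z
  actR_unit : ∀ z, actR z (σ z) = z
  actR_mul : ∀ z h h', σ z = T.rng h → T.src h = T.rng h' →
    actR (actR z h) h' = actR z (T.mul h h')
  act_comm : ∀ g z h, S.src g = ρ z → σ z = T.rng h →
    actL g (actR z h) = actR (actL g z) h
  continuousOn_actL :
    ContinuousOn (fun p : G × Z => actL p.1 p.2) {p : G × Z | S.src p.1 = ρ p.2}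
  continuousOn_actR :
    ContinuousOn (fun p : Z × H => actR p.1 p.2) {p : Z × H | σ p.1 = T.rng p.2}
  free_actL : ∀ g z, S.src g = ρ z → actL g z = z → g = ρ z
  free_actR : ∀ z h, σ z = T.rng h → actR z h = z → h = σ z
  proper_actL : IsProperMap (fun p : {q : G × Z // S.src q.1 = ρ q.2} =>
    ((actL p.1.1 p.1.2, p.1.2) : Z × Z))
  proper_actR : IsProperMap (fun p : {q : Z × H // σ q.1 = T.rng q.2} =>
    ((actR p.1.1 p.1.2, p.1.1) : Z × Z))
  ρ_fiber_orbit : ∀ z z', ρ z = ρ z' ↔ ∃ h, σ z = T.rng h ∧ z' = actR z h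
  σ_fiber_orbit : ∀ z z', σ z = σ z' ↔ ∃ g, S.src g = ρ z ∧ z' = actL g z
  ρ_surj : Set.range ρ = S.units
  σ_surj : Set.range σ = T.units
  quotient_ρ : Topology.IsQuotientMap (fun z => (⟨ρ z, ρ_unit z⟩ : S.units))
  quotient_σ : Topology.IsQuotientMap (fun z => (⟨σ z, σ_unit z⟩ : T.units))

/-- `G` and `H` are groupoid equivalent if there exists a `G`–`H` equivalence. -/
def GroupoidEquivalent [TopologicalSpace G] [TopologicalSpace H]
    (S : GroupoidStruct G) (T : GroupoidStruct H) : Prop :=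
  ∃ (Z : Type (max u v)) (_ : TopologicalSpace Z), Nonempty (GroupoidEquivalenceData S T Z)

/-- Kakutani equivalence of ample groupoids: there are full clopen subsets `X ⊆ G⁰`, `Y ⊆ H⁰`
with `G|_X ≅ H|_Y`. -/
def KakutaniEquivalent [TopologicalSpace G] [TopologicalSpace H]
    (S : GroupoidStruct G) (T : GroupoidStruct H) : Prop :=
  ∃ (X : Set G) (Y : Set H), S.IsUnitClopen X ∧ S.IsFull X ∧ T.IsUnitClopen Y ∧ T.IsFull Y ∧
    Nonempty (GroupoidIso (S.restrict X) (T.restrict Y))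

end GroupoidStruct

/-!
By fullness every unit is the range of an arrow of `GK`, which lies in a compact open bisection
inside the open set `GK`; the ranges of these bisections are open in `G⁰`, so σ-compactness
(hence the Lindelöf property) of `G⁰` yields a countable subcover `r(U₀), r(U₁), …`. Being compact
open in the Hausdorff space `G⁰`, each `r(Uₙ)` is clopen, so cutting `Uₙ` down to the arrows whose
range avoids `r(U₀) ∪ ⋯ ∪ r(Uₙ₋₁)` keeps it a compact open bisection and makes the ranges disjoint.
-/

open Topology

lemma OpenPartialHomeomorph.isEmbedding_domRestrict_of_subset {X Y : Type*}
    [TopologicalSpace X] [TopologicalSpace Y] (e : OpenPartialHomeomorph X Y) {U : Set X}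
    (hU : U ⊆ e.source) : IsEmbedding (U.domRestrict e) :=
  e.isOpenEmbedding_restrict.isEmbedding.comp (IsEmbedding.inclusion hU)

namespace GroupoidStruct

lemma val_image_rngMap_image {G : Type u} {S : GroupoidStruct G} (U : Set G) :
    Subtype.val '' (S.rngMap '' U) = S.rng '' U :=
  Set.image_image _ _ _

variable {G : Type u} [TopologicalSpace G] {S : GroupoidStruct G}

lemma isCompactOpenBisection_empty : S.IsCompactOpenBisection ∅ :=
  ⟨isCompact_empty, isOpen_empty, .of_subsingleton _, .of_subsingleton _⟩

lemma IsCompactOpenBisection.inter_isClopen {U C : Set G} (hU : S.IsCompactOpenBisection U)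
    (hC : IsClopen C) : S.IsCompactOpenBisection (U ∩ C) := by
  obtain ⟨hUc, hUo, hr, hs⟩ := hU
  have hsub : U ∩ C ⊆ U := Set.inter_subset_left
  exact ⟨hUc.inter_right hC.isClosed, hUo.inter hC.isOpen,
    hr.comp (IsEmbedding.inclusion hsub), hs.comp (IsEmbedding.inclusion hsub)⟩

namespace IsAmple

lemma exists_isCompactOpenBisection_subset (hS : S.IsAmple) {O : Set G} (hO : IsOpen O) {g : G}
    (hg : g ∈ O) :
    ∃ U, S.IsCompactOpenBisection U ∧ g ∈ U ∧ U ⊆ O := by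
  obtain ⟨B, hB, hBbasis⟩ := hS.compact_open_basis
  obtain ⟨e, hge, hre⟩ := hS.isLocalHomeomorph_rngMap g
  obtain ⟨e', hge', hse'⟩ := hS.isLocalHomeomorph_srcMap g
  obtain ⟨U, hUB, hgU, hUsub⟩ := hBbasis.exists_subset_of_mem_open
    (⟨⟨hge, hge'⟩, hg⟩ : g ∈ e.source ∩ e'.source ∩ O)
    ((e.open_source.inter e'.open_source).inter hO)
  have hr : IsEmbedding (U.domRestrict S.rngMap) :=
    hre ▸ e.isEmbedding_domRestrict_of_subset fun u hu => (hUsub hu).1.1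
  have hs : IsEmbedding (U.domRestrict S.srcMap) :=
    hse' ▸ e'.isEmbedding_domRestrict_of_subset fun u hu => (hUsub hu).1.2
  exact ⟨U, ⟨(hB U hUB).1, (hB U hUB).2, IsEmbedding.subtypeVal.comp hr,
    IsEmbedding.subtypeVal.comp hs⟩, hgU, fun u hu => (hUsub hu).2⟩

lemma isClopen_rngMap_image (hS : S.IsAmple) {U : Set G} (hUc : IsCompact U) (hUo : IsOpen U) :
    IsClopen (S.rngMap '' U) :=
  have := hS.t2_units
  ⟨(hUc.image hS.isLocalHomeomorph_rngMap.continuous).isClosed,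
    hS.isLocalHomeomorph_rngMap.isOpenMap U hUo⟩

lemma exists_seq_isCompactOpenBisection_cover (hS : S.IsAmple) (hc : IsSigmaCompact S.units)
    {O : Set G} (hO : IsOpen O) (hOr : S.units ⊆ S.rng '' O) :
    ∃ V : ℕ → Set G, (∀ n, S.IsCompactOpenBisection (V n) ∧ V n ⊆ O) ∧
      ⋃ n, S.rngMap '' V n = Set.univ := by
  let ι := {U : Set G // S.IsCompactOpenBisection U ∧ U ⊆ O}
  have : Nonempty ι := ⟨⟨∅, isCompactOpenBisection_empty, Set.empty_subset O⟩⟩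
  have : SigmaCompactSpace S.units := isSigmaCompact_iff_sigmaCompactSpace.mp hc
  have hcover : Set.univ ⊆ ⋃ U : ι, S.rngMap '' U.1 := by
    rintro x -
    obtain ⟨g, hgO, hgx⟩ := hOr x.2
    obtain ⟨U, hU, hgU, hUO⟩ := hS.exists_isCompactOpenBisection_subset hO hgO
    exact Set.mem_iUnion_of_mem ⟨U, hU, hUO⟩ ⟨g, hgU, Subtype.ext hgx⟩
  obtain ⟨f, hf⟩ := isLindelof_univ.indexed_countable_subcover _
    (fun U : ι => hS.isLocalHomeomorph_rngMap.isOpenMap _ U.2.1.2.1) hcover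
  exact ⟨fun n => (f n).1, fun n => (f n).2, Set.univ_subset_iff.mp hf⟩

lemma exists_seq_subset_pairwise_disjoint_rngMap_image (hS : S.IsAmple) {U : ℕ → Set G}
    (hU : ∀ n, S.IsCompactOpenBisection (U n)) :
    ∃ V : ℕ → Set G, (∀ n, S.IsCompactOpenBisection (V n) ∧ V n ⊆ U n) ∧
      Pairwise (fun i j => Disjoint (S.rngMap '' V i) (S.rngMap '' V j)) ∧
      ⋃ n, S.rngMap '' V n = ⋃ n, S.rngMap '' U n := by
  set D := disjointed fun n => S.rngMap '' U n
  have hclopen n : IsClopen (D n) :=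
    disjointedRec (fun _ i ht => ht.diff (hS.isClopen_rngMap_image (hU i).1 (hU i).2.1))
      (hS.isClopen_rngMap_image (hU n).1 (hU n).2.1)
  have himage n : S.rngMap '' (U n ∩ S.rngMap ⁻¹' D n) = D n := by
    rw [Set.image_inter_preimage, Set.inter_eq_right]
    exact disjointed_subset _ n
  refine ⟨fun n => U n ∩ S.rngMap ⁻¹' D n, fun n => ⟨(hU n).inter_isClopen
      ((hclopen n).preimage hS.isLocalHomeomorph_rngMap.continuous), Set.inter_subset_left⟩,
    ?_, ?_⟩
  · simpa only [Function.onFun, himage] using disjoint_disjointed _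
  · simpa only [himage] using iUnion_disjointed

end IsAmple

end GroupoidStruct

open GroupoidStruct in
/-- For an ample groupoid with σ-compact unit space and a clopen `G`-full `K ⊆ G⁰`, there is a
sequence of compact open bisections `Vᵢ ⊆ GK` with mutually disjoint ranges such that
`⨆ᵢ r(Vᵢ) = G⁰`. -/
theorem exists_bisections_covering_units
    {G : Type u} [TopologicalSpace G] (S : GroupoidStruct G)
    (hS : S.IsAmple) (hc : IsSigmaCompact S.units)
    {K : Set G} (hK : S.IsUnitClopen K) (hKf : S.IsFull K) :
    ∃ V : ℕ → Set G,
      (∀ i, S.IsCompactOpenBisection (V i)) ∧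
      (∀ i, V i ⊆ S.src ⁻¹' K) ∧
      (Pairwise fun i j => Disjoint (S.rng '' V i) (S.rng '' V j)) ∧
      (⋃ i, S.rng '' V i) = S.units := by
  have hGK : IsOpen (S.src ⁻¹' K) :=
    hK.2.isOpen.preimage (f := S.srcMap) hS.isLocalHomeomorph_srcMap.continuous
  obtain ⟨U, hU, hcover⟩ :=
    hS.exists_seq_isCompactOpenBisection_cover hc hGK hKf.superset
  obtain ⟨V, hV, hdisj, hunion⟩ :=
    hS.exists_seq_subset_pairwise_disjoint_rngMap_image fun n => (hU n).1
  refine ⟨V, fun n => (hV n).1, fun n => (hV n).2.trans (hU n).2, fun i j hij => ?_, ?_⟩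
  · simpa only [val_image_rngMap_image] using
      (Set.disjoint_image_iff Subtype.val_injective).mpr (hdisj hij)
  · simp only [← val_image_rngMap_image, ← Set.image_iUnion, hunion, hcover,
      Set.image_univ, Subtype.range_coe]
end

section
/- Let G be an ample groupoid such that G⁰ is σ-compact, and suppose that K ⊆ G⁰ is clopen and G-full. Then there is an open bisection W ⊆ G × ℛ such that r(W) = G⁰ × {1} and s(W) ⊆ K × ℕ is clopen in G⁰ × ℕ. -/
universe u v w

open GroupoidStruct in
/-- For an ample groupoid with σ-compact unit space and a clopen `G`-full `K ⊆ G⁰`, there is an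
open bisection `W ⊆ G × ℛ` with `r(W) = G⁰ × {1}` and `s(W) ⊆ K × ℕ` clopen in `G⁰ × ℕ`
(the unit space of `G × ℛ` being identified with `{(u,(i,i)) : u ∈ G⁰, i ∈ ℕ}`). -/
theorem exists_isometry_bisection
    {G : Type u} [TopologicalSpace G] (S : GroupoidStruct G)
    (hS : S.IsAmple) (hc : IsSigmaCompact S.units)
    {K : Set G} (hK : S.IsUnitClopen K) (hKf : S.IsFull K) :
    ∃ W : Set (G × ℕ × ℕ),
      (S.prod Rho).IsOpenBisection W ∧
      (S.prod Rho).rng '' W = {p : G × ℕ × ℕ | p.1 ∈ S.units ∧ p.2 = (1, 1)} ∧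
      (S.prod Rho).src '' W ⊆ {p : G × ℕ × ℕ | p.1 ∈ K ∧ p.2.1 = p.2.2} ∧
      IsClopen {x : (S.prod Rho).units | (x : G × ℕ × ℕ) ∈ (S.prod Rho).src '' W} := by
  classical
  obtain ⟨B, hB1, hB2⟩ := hS.compact_open_basis
  haveI : T2Space S.units := hS.t2_units
  have hrc : Continuous S.rngMap := hS.isLocalHomeomorph_rngMap.continuous
  have hsc : Continuous S.srcMap := hS.isLocalHomeomorph_srcMap.continuous
  have hro : IsOpenMap S.rngMap := hS.isLocalHomeomorph_rngMap.isOpenMap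
  have hso : IsOpenMap S.srcMap := hS.isLocalHomeomorph_srcMap.isOpenMap
  rcases isEmpty_or_nonempty S.units with hE | hNE
  · haveI : IsEmpty G := ⟨fun g => hE.elim (S.srcMap g)⟩
    refine ⟨∅, ⟨isOpen_empty, Topology.IsEmbedding.of_subsingleton _,
      Topology.IsEmbedding.of_subsingleton _⟩, ?_, ?_, ?_⟩
    · ext p; exact isEmptyElim p.1
    · simp
    · have : {x : (S.prod Rho).units | (x : G × ℕ × ℕ) ∈ (S.prod Rho).src '' ∅} = ∅ := by
        ext x; exact isEmptyElim (x : G × ℕ × ℕ).1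
      rw [this]; exact isClopen_empty
  -- Step A: around every unit, a compact open bisection with source in `K`
  have key : ∀ x : S.units, ∃ U : Set G,
      (IsCompact U ∧ IsOpen U ∧ (∀ g ∈ U, S.src g ∈ K) ∧
        Set.InjOn S.rngMap U ∧ Set.InjOn S.srcMap U) ∧ x ∈ S.rngMap '' U := by
    intro x
    have hx : (x : G) ∈ S.rng '' (S.src ⁻¹' K) := by rw [hKf]; exact x.2
    obtain ⟨g, hgK, hgx⟩ := hx
    obtain ⟨er, hger, her⟩ := hS.isLocalHomeomorph_rngMap g
    obtain ⟨es, hges, hes⟩ := hS.isLocalHomeomorph_srcMap g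
    have hKopen : IsOpen (S.srcMap ⁻¹' {u : S.units | (u : G) ∈ K}) :=
      hK.2.isOpen.preimage hsc
    have hgO : g ∈ (er.source ∩ es.source) ∩
        S.srcMap ⁻¹' {u : S.units | (u : G) ∈ K} := ⟨⟨hger, hges⟩, hgK⟩
    obtain ⟨U, hUB, hgU, hUsub⟩ := hB2.exists_subset_of_mem_open hgO
      ((er.open_source.inter es.open_source).inter hKopen)
    refine ⟨U, ⟨(hB1 U hUB).1, (hB1 U hUB).2, fun a ha => (hUsub ha).2,
      ?_, ?_⟩, ⟨g, hgU, Subtype.ext hgx⟩⟩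
    · rw [her]; exact er.injOn.mono fun a ha => (hUsub ha).1.1
    · rw [hes]; exact es.injOn.mono fun a ha => (hUsub ha).1.2
  choose U hU hmem using key
  -- Step B: countable subcover using σ-compactness
  obtain ⟨C, hCc, hCU⟩ := hc
  have hC'c : ∀ n, IsCompact (Subtype.val ⁻¹' C n : Set S.units) := by
    intro n
    rw [Topology.IsEmbedding.subtypeVal.isCompact_iff]
    rw [Set.image_preimage_eq_of_subset
      (by rw [Subtype.range_coe]; exact (Set.subset_iUnion C n).trans hCU.subset)]
    exact hCc n
  have hOopen : ∀ x : S.units, IsOpen (S.rngMap '' U x) := fun x => hro _ (hU x).2.1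
  have hsub : ∀ n, (Subtype.val ⁻¹' C n : Set S.units) ⊆ ⋃ x, S.rngMap '' U x :=
    fun n y _ => Set.mem_iUnion.2 ⟨y, hmem y⟩
  have hfin := fun n => (hC'c n).elim_finite_subcover _ hOopen (hsub n)
  choose t ht using hfin
  have hmemC : ∀ x : S.units, ∃ n, x ∈ (Subtype.val ⁻¹' C n : Set S.units) := by
    intro x
    have : (x : G) ∈ ⋃ n, C n := by rw [hCU]; exact x.2
    simpa using this
  have hidxc : (⋃ n, (t n : Set S.units)).Countable :=
    Set.countable_iUnion fun n => (t n).countable_toSet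
  have hidxne : (⋃ n, (t n : Set S.units)).Nonempty := by
    obtain ⟨x⟩ := hNE
    obtain ⟨n, hn⟩ := hmemC x
    obtain ⟨y, hy, -⟩ := Set.mem_iUnion₂.1 (ht n hn)
    exact ⟨y, Set.mem_iUnion.2 ⟨n, hy⟩⟩
  obtain ⟨f, hf⟩ := hidxc.exists_eq_range hidxne
  set V : ℕ → Set G := fun n => U (f n) with hV
  have hVcover : ∀ x : S.units, ∃ n, x ∈ S.rngMap '' V n := by
    intro x
    obtain ⟨n, hn⟩ := hmemC x
    obtain ⟨y, hy, hxy⟩ := Set.mem_iUnion₂.1 (ht n hn)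
    have : y ∈ Set.range f := by rw [← hf]; exact Set.mem_iUnion.2 ⟨n, hy⟩
    obtain ⟨m, rfl⟩ := this
    exact ⟨m, hxy⟩
  -- Step C: disjointify the ranges
  set O' : ℕ → Set S.units := fun n => S.rngMap '' V n with hO'
  have hO'open : ∀ n, IsOpen (O' n) := fun n => hro _ (hU (f n)).2.1
  have hO'cpt : ∀ n, IsCompact (O' n) := fun n => ((hU (f n)).1).image hrc
  set A : ℕ → Set S.units := fun n => O' n \ ⋃ m ∈ Finset.range n, O' m with hA
  have hAopen : ∀ n, IsOpen (A n) := fun n => (hO'open n).sdiff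
    (Set.Finite.isClosed_biUnion (Finset.range n).finite_toSet
      fun m _ => (hO'cpt m).isClosed)
  have hAclosed : ∀ n, IsClosed (A n) := fun n => ((hO'cpt n).isClosed).sdiff
    (isOpen_biUnion fun m _ => hO'open m)
  have hAdisj : ∀ {m n : ℕ}, m ≠ n → Disjoint (A m) (A n) := by
    have base : ∀ {m n : ℕ}, m < n → Disjoint (A m) (A n) := by
      intro m n h
      refine Set.disjoint_left.2 fun x hxm hxn => ?_
      exact hxn.2 (Set.mem_iUnion₂.2 ⟨m, Finset.mem_range.2 h, hxm.1⟩)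
    intro m n hmn
    rcases lt_or_gt_of_ne hmn with h | h
    · exact base h
    · exact (base h).symm
  have hAcover : ∀ x : S.units, ∃ n, x ∈ A n := by
    intro x
    have hex := hVcover x
    refine ⟨Nat.find hex, Nat.find_spec hex, fun hmem' => ?_⟩
    obtain ⟨m, hm, hxm⟩ := Set.mem_iUnion₂.1 hmem'
    exact Nat.find_min hex (Finset.mem_range.1 hm) hxm
  set Wn : ℕ → Set G := fun n => V n ∩ S.rngMap ⁻¹' A n with hWn
  have hWno : ∀ n, IsOpen (Wn n) := fun n =>
    ((hU (f n)).2.1).inter ((hAopen n).preimage hrc)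
  have hWnc : ∀ n, IsCompact (Wn n) := fun n =>
    ((hU (f n)).1).inter_right ((hAclosed n).preimage hrc)
  have hWnK : ∀ n, ∀ g ∈ Wn n, S.src g ∈ K := fun n g hg => (hU (f n)).2.2.1 g hg.1
  have hWnr : ∀ n, Set.InjOn S.rngMap (Wn n) := fun n =>
    (hU (f n)).2.2.2.1.mono Set.inter_subset_left
  have hWns : ∀ n, Set.InjOn S.srcMap (Wn n) := fun n =>
    (hU (f n)).2.2.2.2.mono Set.inter_subset_left
  have hWnA : ∀ n, S.rngMap '' Wn n = A n := by
    intro n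
    apply Set.Subset.antisymm
    · rintro _ ⟨g, hg, rfl⟩; exact hg.2
    · intro x hx
      obtain ⟨g, hg, hgx⟩ := hx.1
      refine ⟨g, ⟨hg, ?_⟩, hgx⟩
      show S.rngMap g ∈ A n
      rw [hgx]; exact hx
  -- Step D: the bisection
  set W : Set (G × ℕ × ℕ) := ⋃ n, (Wn n) ×ˢ ({((1:ℕ), n)} : Set (ℕ × ℕ)) with hWdef
  have hmemW : ∀ p : G × ℕ × ℕ, p ∈ W ↔ ∃ n, p.1 ∈ Wn n ∧ p.2 = (1, n) := by
    intro p
    simp only [hWdef, Set.mem_iUnion, Set.mem_prod, Set.mem_singleton_iff]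
  have hWopen : IsOpen W := isOpen_iUnion fun n => (hWno n).prod (isOpen_discrete _)
  have hWslice : ∀ w : W, ∃ n, (w : G × ℕ × ℕ).1 ∈ Wn n ∧ (w : G × ℕ × ℕ).2 = (1, n) :=
    fun w => (hmemW _).1 w.2
  -- the range restriction is an embedding
  set ρm : W → S.units := fun w => S.rngMap (w : G × ℕ × ℕ).1 with hρm
  have hρcont : Continuous ρm := hrc.comp continuous_subtype_val.fst
  have hρinj : Function.Injective ρm := by
    intro w w' hww
    obtain ⟨n, hn, h2⟩ := hWslice w
    obtain ⟨m, hm, h2'⟩ := hWslice w'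
    have h1 : ρm w ∈ A n := hWnA n ▸ Set.mem_image_of_mem _ hn
    have h2m : ρm w' ∈ A m := hWnA m ▸ Set.mem_image_of_mem _ hm
    have hnm : n = m := by
      by_contra hne
      rw [← hww] at h2m
      exact Set.disjoint_left.1 (hAdisj hne) h1 h2m
    subst hnm
    have hfst : (w : G × ℕ × ℕ).1 = (w' : G × ℕ × ℕ).1 := hWnr n hn hm hww
    apply Subtype.ext
    exact Prod.ext hfst (h2.trans h2'.symm)
  have hρopen : IsOpenMap ρm := by
    intro O hO
    obtain ⟨Ω, hΩ, hΩeq⟩ := isOpen_induced_iff.1 hO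
    have himg : ρm '' O = S.rngMap '' (Prod.fst '' (Ω ∩ W)) := by
      ext u
      constructor
      · rintro ⟨w, hw, rfl⟩
        have hwΩ : (w : G × ℕ × ℕ) ∈ Ω := by rw [← hΩeq] at hw; exact hw
        exact ⟨_, ⟨_, ⟨hwΩ, w.2⟩, rfl⟩, rfl⟩
      · rintro ⟨g, ⟨p, ⟨hpΩ, hpW⟩, rfl⟩, rfl⟩
        exact ⟨⟨p, hpW⟩, by rw [← hΩeq]; exact hpΩ, rfl⟩
    rw [himg]
    exact hro _ (isOpenMap_fst _ (hΩ.inter hWopen))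
  have hρemb : Topology.IsEmbedding ρm :=
    (Topology.IsOpenEmbedding.of_continuous_injective_isOpenMap
      hρcont hρinj hρopen).isEmbedding
  have hrngEmb : Topology.IsEmbedding (W.restrict (S.prod Rho).rng) := by
    have hFeq : W.restrict (S.prod Rho).rng =
        (fun u : S.units => (((u : G), ((1:ℕ), (1:ℕ))) : G × ℕ × ℕ)) ∘ ρm := by
      funext w
      obtain ⟨n, hn, h2⟩ := hWslice w
      show ((S.rng (w : G × ℕ × ℕ).1, ((w : G × ℕ × ℕ).2.1, (w : G × ℕ × ℕ).2.1)) :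
        G × ℕ × ℕ) = (S.rng (w : G × ℕ × ℕ).1, (1, 1))
      rw [h2]
    rw [hFeq]
    have hιemb : Topology.IsEmbedding
        (fun u : S.units => (((u : G), ((1:ℕ), (1:ℕ))) : G × ℕ × ℕ)) := by
      apply Topology.IsEmbedding.of_comp
        (continuous_subtype_val.prodMk continuous_const) continuous_fst
      exact Topology.IsEmbedding.subtypeVal
    exact hιemb.comp hρemb
  -- the source restriction is an embedding
  set σm : W → S.units × (ℕ × ℕ) := fun w =>
    (S.srcMap (w : G × ℕ × ℕ).1, ((w : G × ℕ × ℕ).2.2, (w : G × ℕ × ℕ).2.2)) with hσm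
  have hσcont : Continuous σm := by
    refine Continuous.prodMk (hsc.comp continuous_subtype_val.fst) ?_
    exact (continuous_subtype_val.snd.snd).prodMk continuous_subtype_val.snd.snd
  have hσinj : Function.Injective σm := by
    intro w w' hww
    obtain ⟨n, hn, h2⟩ := hWslice w
    obtain ⟨m, hm, h2'⟩ := hWslice w'
    have hs1 : S.srcMap (w : G × ℕ × ℕ).1 = S.srcMap (w' : G × ℕ × ℕ).1 :=
      congrArg Prod.fst hww
    have hsnd : (w : G × ℕ × ℕ).2.2 = (w' : G × ℕ × ℕ).2.2 :=
      congrArg (fun q => q.2.1) hww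
    have hn2 : (w : G × ℕ × ℕ).2.2 = n := by rw [h2]
    have hm2 : (w' : G × ℕ × ℕ).2.2 = m := by rw [h2']
    have hnm : n = m := by rw [← hn2, ← hm2, hsnd]
    subst hnm
    have hfst : (w : G × ℕ × ℕ).1 = (w' : G × ℕ × ℕ).1 := hWns n hn hm hs1
    apply Subtype.ext
    exact Prod.ext hfst (h2.trans h2'.symm)
  have hσopen : IsOpenMap σm := by
    intro O hO
    obtain ⟨Ω, hΩ, hΩeq⟩ := isOpen_induced_iff.1 hO
    have himg : σm '' O = ⋃ n,
        (S.srcMap '' {g : G | ((g, ((1:ℕ), n)) : G × ℕ × ℕ) ∈ Ω ∩ W}) ×ˢ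
          ({((n:ℕ), n)} : Set (ℕ × ℕ)) := by
      ext u
      simp only [Set.mem_iUnion, Set.mem_prod, Set.mem_singleton_iff]
      constructor
      · rintro ⟨w, hw, rfl⟩
        obtain ⟨n, hn, h2⟩ := hWslice w
        have hwΩ : (w : G × ℕ × ℕ) ∈ Ω := by rw [← hΩeq] at hw; exact hw
        refine ⟨n, ⟨(w : G × ℕ × ℕ).1, ?_, rfl⟩, ?_⟩
        · show (((w : G × ℕ × ℕ).1, ((1:ℕ), n)) : G × ℕ × ℕ) ∈ Ω ∩ W
          have heta : ((w : G × ℕ × ℕ).1, ((1:ℕ), n)) = (w : G × ℕ × ℕ) := by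
            rw [← h2]
          rw [heta]; exact ⟨hwΩ, w.2⟩
        · show ((w : G × ℕ × ℕ).2.2, (w : G × ℕ × ℕ).2.2) = (n, n)
          rw [h2]
      · rintro ⟨n, ⟨g, ⟨hgΩ, hgW⟩, hgu⟩, hu2⟩
        refine ⟨⟨(g, (1, n)), hgW⟩, by rw [← hΩeq]; exact hgΩ, ?_⟩
        show (S.srcMap g, ((n:ℕ), n)) = u
        rw [hgu, ← hu2]
    rw [himg]
    refine isOpen_iUnion fun n => IsOpen.prod (hso _ ?_) (isOpen_discrete _)
    exact (hΩ.inter hWopen).preimage (continuous_id.prodMk continuous_const)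
  have hσemb : Topology.IsEmbedding σm :=
    (Topology.IsOpenEmbedding.of_continuous_injective_isOpenMap
      hσcont hσinj hσopen).isEmbedding
  have hsrcEmb : Topology.IsEmbedding (W.restrict (S.prod Rho).src) := by
    have hFeq : W.restrict (S.prod Rho).src =
        (Prod.map (Subtype.val : S.units → G) (id : ℕ × ℕ → ℕ × ℕ)) ∘ σm := rfl
    rw [hFeq]
    exact (Topology.IsEmbedding.subtypeVal.prodMap Topology.IsEmbedding.id).comp hσemb
  -- range image
  have hrngW : (S.prod Rho).rng '' W = {p : G × ℕ × ℕ | p.1 ∈ S.units ∧ p.2 = (1, 1)} := by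
    ext p
    constructor
    · rintro ⟨q, hq, rfl⟩
      obtain ⟨n, hn, h2⟩ := (hmemW q).1 hq
      refine ⟨⟨S.src_rng _, S.rng_rng _⟩, ?_⟩
      show ((q.2.1, q.2.1) : ℕ × ℕ) = (1, 1)
      rw [h2]
    · rintro ⟨hu, hp2⟩
      obtain ⟨n, hAn⟩ := hAcover ⟨p.1, hu⟩
      rw [← hWnA n] at hAn
      obtain ⟨g, hg, hgx⟩ := hAn
      refine ⟨(g, (1, n)), (hmemW _).2 ⟨n, hg, rfl⟩, ?_⟩
      have h1 : S.rng g = p.1 := congrArg Subtype.val hgx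
      exact Prod.ext_iff.2 ⟨h1, hp2.symm⟩
  -- source image contained in K × diagonal
  have hsrcW : (S.prod Rho).src '' W ⊆ {p : G × ℕ × ℕ | p.1 ∈ K ∧ p.2.1 = p.2.2} := by
    rintro _ ⟨q, hq, rfl⟩
    obtain ⟨n, hn, h2⟩ := (hmemW q).1 hq
    exact ⟨hWnK n _ hn, rfl⟩
  -- clopen-ness of the source image in the unit space
  have hPunit : ∀ x : (S.prod Rho).units,
      (x : G × ℕ × ℕ).1 ∈ S.units ∧ (x : G × ℕ × ℕ).2.1 = (x : G × ℕ × ℕ).2.2 := by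
    intro x
    obtain ⟨hsrc, hrng⟩ := x.2
    have h1 : S.src (x : G × ℕ × ℕ).1 = (x : G × ℕ × ℕ).1 := congrArg Prod.fst hsrc
    have h2 : S.rng (x : G × ℕ × ℕ).1 = (x : G × ℕ × ℕ).1 := congrArg Prod.fst hrng
    have h3 : (((x : G × ℕ × ℕ).2.2, (x : G × ℕ × ℕ).2.2) : ℕ × ℕ) =
        (x : G × ℕ × ℕ).2 := congrArg Prod.snd hsrc
    exact ⟨⟨h1, h2⟩, (congrArg Prod.fst h3).symm.trans rfl⟩
  set Bn : ℕ → Set S.units := fun n => S.srcMap '' Wn n with hBn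
  have hBno : ∀ n, IsOpen (Bn n) := fun n => hso _ (hWno n)
  have hBnclosed : ∀ n, IsClosed (Bn n) := fun n => ((hWnc n).image hsc).isClosed
  set E : Set (S.units × (ℕ × ℕ)) := ⋃ n, Bn n ×ˢ ({((n:ℕ), n)} : Set (ℕ × ℕ)) with hE
  have hmemE : ∀ p : S.units × (ℕ × ℕ), p ∈ E ↔ ∃ n, p.1 ∈ Bn n ∧ p.2 = (n, n) := by
    intro p
    simp only [hE, Set.mem_iUnion, Set.mem_prod, Set.mem_singleton_iff]
  have hEopen : IsOpen E := isOpen_iUnion fun n => (hBno n).prod (isOpen_discrete _)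
  have hEclosed : IsClosed E := by
    rw [← isOpen_compl_iff, isOpen_iff_mem_nhds]
    intro p hp
    rcases eq_or_ne p.2.1 p.2.2 with heq | hne
    · refine Filter.mem_of_superset (IsOpen.mem_nhds
        (((hBnclosed p.2.1).isOpen_compl).prod (isOpen_discrete {p.2})) ⟨?_, rfl⟩) ?_
      · intro hB
        exact hp ((hmemE p).2 ⟨p.2.1, hB, Prod.ext_iff.2 ⟨rfl, heq.symm⟩⟩)
      · rintro q ⟨hq1, hq2⟩
        intro hqE
        obtain ⟨n, hn1, hn2⟩ := (hmemE q).1 hqE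
        have : p.2.1 = n := by
          have : q.2 = p.2 := hq2
          rw [← this, hn2]
        rw [this] at hq1
        exact hq1 hn1
    · refine Filter.mem_of_superset (IsOpen.mem_nhds
        (isOpen_univ.prod (isOpen_discrete {p.2})) ⟨trivial, rfl⟩) ?_
      rintro q ⟨-, hq2⟩
      intro hqE
      obtain ⟨n, -, hn2⟩ := (hmemE q).1 hqE
      have hq2' : q.2 = p.2 := hq2
      rw [hq2'] at hn2
      exact hne (by rw [hn2])
  set ψ : (S.prod Rho).units → S.units × (ℕ × ℕ) := fun x =>
    (⟨(x : G × ℕ × ℕ).1, (hPunit x).1⟩, (x : G × ℕ × ℕ).2) with hψ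
  have hψcont : Continuous ψ := by
    refine Continuous.prodMk ?_ continuous_subtype_val.snd
    exact Continuous.subtype_mk continuous_subtype_val.fst _
  have hset : {x : (S.prod Rho).units | (x : G × ℕ × ℕ) ∈ (S.prod Rho).src '' W} =
      ψ ⁻¹' E := by
    ext x
    obtain ⟨hx1, hx2⟩ := hPunit x
    simp only [Set.mem_setOf_eq, Set.mem_preimage]
    rw [hmemE]
    constructor
    · rintro ⟨q, hq, hqx⟩
      obtain ⟨n, hn, h2⟩ := (hmemW q).1 hq
      have hq2 : q.2.2 = n := by rw [h2]
      have hsfst : S.src q.1 = (x : G × ℕ × ℕ).1 := congrArg Prod.fst hqx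
      have hssnd : ((q.2.2, q.2.2) : ℕ × ℕ) = (x : G × ℕ × ℕ).2 := congrArg Prod.snd hqx
      refine ⟨n, ⟨q.1, hn, Subtype.ext hsfst⟩, ?_⟩
      show (x : G × ℕ × ℕ).2 = (n, n)
      rw [← hssnd, hq2]
    · rintro ⟨n, ⟨g, hg, hgx⟩, hx2n⟩
      have hsg : S.src g = (x : G × ℕ × ℕ).1 := congrArg Subtype.val hgx
      refine ⟨(g, (1, n)), (hmemW _).2 ⟨n, hg, rfl⟩, ?_⟩
      show ((S.src g, ((n:ℕ), n)) : G × ℕ × ℕ) = (x : G × ℕ × ℕ)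
      have hx2n' : (x : G × ℕ × ℕ).2 = (n, n) := hx2n
      exact Prod.ext_iff.2 ⟨hsg, hx2n'.symm⟩
  have hclopen : IsClopen {x : (S.prod Rho).units | (x : G × ℕ × ℕ) ∈ (S.prod Rho).src '' W} := by
    rw [hset]
    exact ⟨hEclosed.preimage hψcont, hEopen.preimage hψcont⟩
  exact ⟨W, ⟨hWopen, hrngEmb, hsrcEmb⟩, hrngW, hsrcW, hclopen⟩
end

section
/- Let G be an ample groupoid such that G⁰ is σ-compact, and suppose that K ⊆ G⁰ is clopen and G-full. Then the topological groupoids G × ℛ and G|_K × ℛ are isomorphic. -/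
universe u v w

/-!
By fullness every unit `x` is the range of an arrow with source in `K`, and in an ample groupoid
such arrows can be chosen continuously on a clopen neighbourhood of `x`, their sources sweeping
out a clopen set homeomorphic to it. σ-compactness leaves countably many such choices; making
their domains disjoint gives a clopen partition `G⁰ = ⋃ₘ Aₘ` with `A₀ = K` and a continuous
arrow `c x` from `κ x ∈ K` to `x`, where `κ` is injective on each `Aₘ`. A Hilbert hotel
bookkeeping turns `κ` into a homeomorphism `G⁰ × ℕ ≃ K × ℕ`: the points of `Aₘ`, `m ≠ 0`, take
the rooms `⟪m, i⟫` above their image, and the points of `K` fill the remaining rooms in order.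
Conjugation by `c`, `g ↦ c(r g)⁻¹ g c(s g)`, together with this homeomorphism on the
`ℛ`-coordinates, is the isomorphism `G × ℛ ≅ G|_K × ℛ`.
-/

open Filter Topology

namespace Nat

theorem count_eq_count_of_forall_lt_iff {p q : ℕ → Prop} [DecidablePred p] [DecidablePred q]
    {n : ℕ} (h : ∀ k < n, (p k ↔ q k)) : count p n = count q n :=
  le_antisymm (count_mono_left fun k hk => (h k hk).1) (count_mono_left fun k hk => (h k hk).2)

theorem nth_eq_nth_of_forall_le_iff {p q : ℕ → Prop} (hp : (Set.ofPred p).Infinite) {i : ℕ}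
    (h : ∀ k ≤ nth p i, (p k ↔ q k)) : nth p i = nth q i := by
  classical
  have hq : q (nth p i) := (h _ le_rfl).1 (nth_mem_of_infinite hp i)
  have hcount : count q (nth p i) = i := by
    rw [← count_eq_count_of_forall_lt_iff fun k hk => h k hk.le, count_nth_of_infinite hp]
  conv_lhs => rw [← nth_count hq, hcount]

end Nat

section Clopen

variable {X Y Z : Type*} [TopologicalSpace X] [TopologicalSpace Y] [TopologicalSpace Z]

theorem continuous_if_of_isClopen {p : X → Prop} [DecidablePred p] {f g : X → Z}
    (hp : IsClopen {x | p x}) (hf : ContinuousOn f {x | p x}) (hg : ContinuousOn g {x | ¬p x}) :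
    Continuous fun x => if p x then f x else g x :=
  continuous_if (by simp [hp.frontier_eq]) (by rwa [hp.isClosed.closure_eq])
    (by rwa [← Set.compl_ofPred, hp.compl.isClosed.closure_eq])

theorem eventually_forall_le_iff_of_isClopen {P : Y → ℕ → Prop}
    (hP : ∀ n, IsClopen {y | P y n}) (y₀ : Y) (N : ℕ) :
    ∀ᶠ y in 𝓝 y₀, ∀ n ≤ N, (P y n ↔ P y₀ n) := by
  refine (eventually_all_finite (Set.finite_Iic N)).2 fun n _ => ?_
  by_cases h : P y₀ n
  · filter_upwards [(hP n).isOpen.mem_nhds h] with y hy using iff_of_true hy h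
  · filter_upwards [(hP n).compl.isOpen.mem_nhds h] with y hy using iff_of_false hy h

theorem continuous_count_of_isClopen {P : Y → ℕ → Prop} [∀ y, DecidablePred (P y)]
    (hP : ∀ n, IsClopen {y | P y n}) (n : ℕ) : Continuous fun y => Nat.count (P y) n := by
  refine IsLocallyConstant.continuous <| (IsLocallyConstant.iff_eventually_eq _).2 fun y₀ => ?_
  filter_upwards [eventually_forall_le_iff_of_isClopen hP y₀ n] with y hy
  exact Nat.count_eq_count_of_forall_lt_iff fun k hk => hy k hk.le

theorem continuous_nth_of_isClopen {P : Y → ℕ → Prop} (hP : ∀ n, IsClopen {y | P y n})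
    (hinf : ∀ y, (Set.ofPred (P y)).Infinite) (i : ℕ) : Continuous fun y => Nat.nth (P y) i := by
  refine IsLocallyConstant.continuous <| (IsLocallyConstant.iff_eventually_eq _).2 fun y₀ => ?_
  filter_upwards [eventually_forall_le_iff_of_isClopen hP y₀ (Nat.nth (P y₀) i)] with y hy
  exact (Nat.nth_eq_nth_of_forall_le_iff (hinf y₀) fun k hk => (hy k hk).symm).symm

end Clopen

section Fibers

variable {X Z : Type*} [TopologicalSpace X] [TopologicalSpace Z]

open Classical in
theorem continuous_find_of_isClopen {V : ℕ → Set X} (hV : ∀ n, IsClopen (V n))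
    (h : ∀ x, ∃ n, x ∈ V n) : Continuous fun x => Nat.find (h x) := by
  refine continuous_discrete_rng.2 fun m => ?_
  have : (fun x => Nat.find (h x)) ⁻¹' {m} = V m ∩ ⋂ j ∈ Set.Iio m, (V j)ᶜ := by
    ext x
    simp [Nat.find_eq_iff]
  rw [this]
  exact (hV m).isOpen.inter ((Set.finite_Iio m).isOpen_biInter fun j _ => (hV j).compl.isOpen)

theorem continuous_of_continuousOn_fibers {d : X → ℕ} (hd : Continuous d) {f : ℕ → X → Z}
    (hf : ∀ m, ContinuousOn (f m) {x | d x = m}) : Continuous fun x => f (d x) x := by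
  refine continuous_iff_continuousAt.2 fun x₀ => ?_
  have hfiber : {x | d x = d x₀} ∈ 𝓝 x₀ :=
    ((isClopen_discrete {d x₀}).preimage hd).isOpen.mem_nhds rfl
  refine ((hf (d x₀)).continuousAt hfiber).congr ?_
  filter_upwards [hfiber] with x hx
  rw [hx]

end Fibers

theorem OpenPartialHomeomorph.isClopen_image_of_isCompact {X Y : Type*} [TopologicalSpace X]
    [TopologicalSpace Y] [T2Space Y] (e : OpenPartialHomeomorph X Y) {B : Set X}
    (hc : IsCompact B) (ho : IsOpen B) (hB : B ⊆ e.source) : IsClopen (e '' B) :=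
  ⟨(hc.image_of_continuousOn (e.continuousOn.mono hB)).isClosed,
    e.isOpen_image_of_subset_source ho hB⟩

namespace HilbertHotel

variable {X Y : Type*} (d : X → ℕ) (κ : X → Y)

/-- Room `n = ⟪m, i⟫` of `y` with `m ≠ 0` is taken by the guest `(x, i)` with `d x = m` and
`κ x = y`; the guests `(x, i)` with `d x = 0` fill the remaining rooms of `κ x` in order. -/
def Occupied (y : Y) (n : ℕ) : Prop := n.unpair.1 ≠ 0 ∧ y ∈ κ '' {x | d x = n.unpair.1}

open Classical in
noncomputable def room (x : X) (i : ℕ) : ℕ :=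
  if d x = 0 then Nat.nth (fun n => ¬Occupied d κ (κ x) n) i else Nat.pair (d x) i

open Classical in
noncomputable def guest (ψ : ℕ → Y → X) (y : Y) (n : ℕ) : X × ℕ :=
  if Occupied d κ y n then (ψ n.unpair.1 y, n.unpair.2)
  else (ψ 0 y, Nat.count (fun k => ¬Occupied d κ y k) n)

variable {d κ}

theorem infinite_setOf_not_occupied (y : Y) : (Set.ofPred fun n => ¬Occupied d κ y n).Infinite :=
  Set.infinite_of_injective_forall_mem (f := Nat.pair 0)
    (fun _ _ h => (Nat.pair_eq_pair.1 h).2) fun _ hj => hj.1 (by rw [Nat.unpair_pair])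

theorem isClopen_setOf_occupied [TopologicalSpace Y] (hB : ∀ m, IsClopen (κ '' {x | d x = m}))
    (n : ℕ) : IsClopen {y | Occupied d κ y n} := by
  by_cases h : n.unpair.1 = 0
  · rw [show {y | Occupied d κ y n} = ∅ from
      Set.eq_empty_of_forall_notMem fun y (hy : Occupied d κ y n) => hy.1 h]
    exact isClopen_empty
  · rw [show {y | Occupied d κ y n} = κ '' {x | d x = n.unpair.1} from
      Set.ext fun y => and_iff_right h]
    exact hB _

section Inverse

variable {ψ : ℕ → Y → X} (hψ : ∀ x, ψ (d x) (κ x) = x)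
include hψ

theorem guest_room (x : X) (i : ℕ) : guest d κ ψ (κ x) (room d κ x i) = (x, i) := by
  classical
  by_cases hx : d x = 0
  · have hn := Nat.nth_mem_of_infinite (infinite_setOf_not_occupied (d := d) (κ := κ) (κ x)) i
    rw [room, if_pos hx, guest, if_neg hn,
      Nat.count_nth_of_infinite (infinite_setOf_not_occupied _), ← hx, hψ]
  · have hn : Occupied d κ (κ x) (Nat.pair (d x) i) := by
      simpa [Occupied, hx] using ⟨x, rfl, rfl⟩
    rw [room, if_neg hx, guest, if_pos hn, Nat.unpair_pair, hψ]

theorem room_guest (h0 : ∀ y, ∃ x, d x = 0 ∧ κ x = y) (y : Y) (n : ℕ) :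
    (κ (guest d κ ψ y n).1, room d κ (guest d κ ψ y n).1 (guest d κ ψ y n).2) = (y, n) := by
  classical
  by_cases hn : Occupied d κ y n
  · obtain ⟨hm, x, hx, rfl⟩ := hn
    rw [guest, if_pos ⟨hm, x, hx, rfl⟩]
    simp only [Set.mem_ofPred_eq] at hx
    rw [← hx, hψ, room, if_neg (hx ▸ hm), hx, Nat.pair_unpair]
  · obtain ⟨x, hx, rfl⟩ := h0 y
    rw [guest, if_neg hn, ← hx, hψ, room, if_pos hx]
    exact Prod.ext rfl (Nat.nth_count hn)

end Inverse

section Continuity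

variable [TopologicalSpace X] [TopologicalSpace Y] (hB : ∀ m, IsClopen (κ '' {x | d x = m}))
include hB

theorem continuous_room (hd : Continuous d) (hκ : Continuous κ) :
    Continuous fun p : X × ℕ => room d κ p.1 p.2 := by
  classical
  refine continuous_prod_of_discrete_right.2 fun i =>
    continuous_if_of_isClopen ((isClopen_discrete {0}).preimage hd) ?_ ?_
  · exact ((continuous_nth_of_isClopen (fun n => (isClopen_setOf_occupied hB n).compl)
      infinite_setOf_not_occupied i).comp hκ).continuousOn
  · exact ((continuous_of_discreteTopology (f := fun m => Nat.pair m i)).comp hd).continuousOn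

theorem continuous_guest {ψ : ℕ → Y → X} (hψc : ∀ m, ContinuousOn (ψ m) (κ '' {x | d x = m}))
    (h0 : ∀ y, ∃ x, d x = 0 ∧ κ x = y) :
    Continuous fun q : Y × ℕ => guest d κ ψ q.1 q.2 := by
  classical
  have hψ0 : Continuous (ψ 0) := by
    rw [← continuousOn_univ, ← Set.eq_univ_of_forall h0]
    exact hψc 0
  refine continuous_prod_of_discrete_right.2 fun n =>
    continuous_if_of_isClopen (isClopen_setOf_occupied hB n) ?_ ?_
  · exact ((hψc _).mono fun y (hy : Occupied d κ y n) => hy.2).prodMk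
      (continuousOn_const (c := n.unpair.2))
  · exact (hψ0.prodMk (continuous_count_of_isClopen
      (fun k => (isClopen_setOf_occupied hB k).compl) n)).continuousOn

end Continuity

end HilbertHotel

open HilbertHotel in
theorem exists_homeomorph_prod_nat {X Y : Type*} [TopologicalSpace X] [TopologicalSpace Y]
    {d : X → ℕ} {κ : X → Y} {ψ : ℕ → Y → X} (hd : Continuous d) (hκ : Continuous κ)
    (hB : ∀ m, IsClopen (κ '' {x | d x = m})) (hψ : ∀ x, ψ (d x) (κ x) = x)
    (hψc : ∀ m, ContinuousOn (ψ m) (κ '' {x | d x = m})) (h0 : ∀ y, ∃ x, d x = 0 ∧ κ x = y) :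
    ∃ e : X × ℕ ≃ₜ Y × ℕ, ∀ p, (e p).1 = κ p.1 :=
  ⟨{ toFun := fun p => (κ p.1, room d κ p.1 p.2)
     invFun := fun q => guest d κ ψ q.1 q.2
     left_inv := fun p => guest_room hψ p.1 p.2
     right_inv := fun q => room_guest hψ h0 q.1 q.2
     continuous_toFun := (hκ.comp continuous_fst).prodMk (continuous_room hB hd hκ)
     continuous_invFun := continuous_guest hB hψc h0 }, fun _ => rfl⟩

namespace GroupoidStruct

section Algebra

variable {G : Type u} (S : GroupoidStruct G) {a b c g g' h : G}

theorem inv_eq_of_mul_eq_rng (hab : S.src a = S.rng b) (hmul : S.mul a b = S.rng a) :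
    S.inv a = b := by
  calc S.inv a = S.mul (S.inv a) (S.src (S.inv a)) := (S.mul_src _).symm
    _ = S.mul (S.inv a) (S.mul a b) := by rw [S.src_inv, hmul]
    _ = S.mul (S.mul (S.inv a) a) b := (S.mul_assoc _ _ _ (S.src_inv a) hab).symm
    _ = b := by rw [S.inv_mul, hab, S.rng_mul_self]

theorem mul_inv_cancel_left (hab : S.rng a = S.rng b) : S.mul a (S.mul (S.inv a) b) = b := by
  rw [← S.mul_assoc _ _ _ (S.rng_inv a).symm (by rw [S.src_inv, hab]), S.mul_inv, hab,
    S.rng_mul_self]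

theorem inv_inv (a : G) : S.inv (S.inv a) = a :=
  S.inv_eq_of_mul_eq_rng (S.src_inv a) (by rw [S.inv_mul, S.rng_inv])

theorem mul_inv_rev (hab : S.src a = S.rng b) :
    S.inv (S.mul a b) = S.mul (S.inv b) (S.inv a) := by
  have hba : S.src (S.inv b) = S.rng (S.inv a) := by rw [S.src_inv, S.rng_inv, hab]
  apply S.inv_eq_of_mul_eq_rng
  · rw [S.src_mul _ _ hab, S.rng_mul _ _ hba, S.rng_inv]
  · rw [S.mul_assoc _ _ _ hab (by rw [S.rng_mul _ _ hba, S.rng_inv]),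
      ← S.mul_assoc _ _ _ (by rw [S.rng_inv]) hba, S.mul_inv, ← hab, ← S.rng_inv a,
      S.rng_mul_self, S.mul_inv, S.rng_mul _ _ hab]

def conj (a g b : G) : G := S.mul (S.inv a) (S.mul g b)

variable {S}

section
variable (ha : S.rng a = S.rng g) (hb : S.rng b = S.src g)
include ha hb

theorem src_inv_eq_rng_mul : S.src (S.inv a) = S.rng (S.mul g b) := by
  rw [S.src_inv, S.rng_mul _ _ hb.symm, ha]

theorem rng_conj : S.rng (S.conj a g b) = S.src a := by
  rw [conj, S.rng_mul _ _ (src_inv_eq_rng_mul ha hb), S.rng_inv]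

theorem src_conj : S.src (S.conj a g b) = S.src b := by
  rw [conj, S.src_mul _ _ (src_inv_eq_rng_mul ha hb), S.src_mul _ _ hb.symm]

theorem conj_inv_conj : S.conj (S.inv a) (S.conj a g b) (S.inv b) = g := by
  have hgb : S.mul (S.mul g b) (S.inv b) = g := by
    rw [S.mul_assoc _ _ _ hb.symm (S.rng_inv b).symm, S.mul_inv, hb, S.mul_src]
  rw [conj, conj, S.inv_inv, S.mul_assoc _ _ _ (src_inv_eq_rng_mul ha hb)
    (by rw [S.rng_inv, S.src_mul _ _ hb.symm]), hgb, S.mul_inv_cancel_left ha]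

theorem inv_conj : S.inv (S.conj a g b) = S.conj b (S.inv g) a := by
  rw [conj, conj, S.mul_inv_rev (src_inv_eq_rng_mul ha hb), S.mul_inv_rev hb.symm, S.inv_inv,
    S.mul_assoc _ _ _ (by rw [S.src_inv, S.rng_inv, hb]) (by rw [S.src_inv, ha])]

end

theorem conj_conj_inv (ha : S.src a = S.rng h) (hb : S.src b = S.src h) :
    S.conj a (S.conj (S.inv a) h (S.inv b)) b = h := by
  have := conj_inv_conj (a := S.inv a) (g := h) (b := S.inv b) (by rw [S.rng_inv, ha])
    (by rw [S.rng_inv, hb])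
  rwa [S.inv_inv, S.inv_inv] at this

theorem conj_mul_conj (ha : S.rng a = S.rng g) (hb : S.rng b = S.src g)
    (hgg' : S.src g = S.rng g') (hc : S.rng c = S.src g') :
    S.mul (S.conj a g b) (S.conj b g' c) = S.conj a (S.mul g g') c := by
  have hb' : S.rng b = S.rng g' := hb.trans hgg'
  have hcomp : S.src b = S.rng (S.conj b g' c) := (rng_conj hb' hc).symm
  rw [conj, conj, S.mul_assoc _ _ _ (src_inv_eq_rng_mul ha hb)
      (by rw [S.src_mul _ _ hb.symm, ← conj, hcomp]),
    S.mul_assoc _ _ _ hb.symm (by rw [← conj, hcomp]),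
    S.mul_inv_cancel_left (by rw [S.rng_mul _ _ hc.symm, hb']),
    ← S.mul_assoc _ _ _ hgg' hc.symm, ← conj]

theorem conj_rng_self (a : G) : S.conj a (S.rng a) a = S.src a := by
  rw [conj, S.rng_mul_self, S.inv_mul]

end Algebra

section UnitMaps

variable {G : Type u} (S : GroupoidStruct G) {g g' : G}

theorem rngMap_mul (h : S.src g = S.rng g') : S.rngMap (S.mul g g') = S.rngMap g :=
  Subtype.ext (S.rng_mul _ _ h)

theorem srcMap_mul (h : S.src g = S.rng g') : S.srcMap (S.mul g g') = S.srcMap g' :=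
  Subtype.ext (S.src_mul _ _ h)

theorem srcMap_eq_rngMap (h : S.src g = S.rng g') : S.srcMap g = S.rngMap g' := Subtype.ext h

theorem rngMap_inv (g : G) : S.rngMap (S.inv g) = S.srcMap g := Subtype.ext (S.rng_inv g)
theorem srcMap_inv (g : G) : S.srcMap (S.inv g) = S.rngMap g := Subtype.ext (S.src_inv g)
theorem rngMap_src (g : G) : S.rngMap (S.src g) = S.srcMap g := Subtype.ext (S.rng_src g)
theorem srcMap_src (g : G) : S.srcMap (S.src g) = S.srcMap g := Subtype.ext (S.src_src g)
theorem rngMap_rng (g : G) : S.rngMap (S.rng g) = S.rngMap g := Subtype.ext (S.rng_rng g)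
theorem srcMap_rng (g : G) : S.srcMap (S.rng g) = S.rngMap g := Subtype.ext (S.src_rng g)

end UnitMaps

namespace IsTopologicalGroupoid

variable {G : Type u} [TopologicalSpace G] {S : GroupoidStruct G} (hS : S.IsTopologicalGroupoid)
  {X : Type v} [TopologicalSpace X]
include hS

theorem continuous_mul {f g : X → G} (hf : Continuous f) (hg : Continuous g)
    (hfg : ∀ x, S.src (f x) = S.rng (g x)) : Continuous fun x => S.mul (f x) (g x) :=
  hS.continuousOn_mul.comp_continuous (hf.prodMk hg) hfg

theorem continuous_rng : Continuous S.rng :=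
  (hS.continuous_mul continuous_id hS.continuous_inv fun a => (S.rng_inv a).symm).congr S.mul_inv

theorem continuous_src : Continuous S.src :=
  (hS.continuous_mul hS.continuous_inv continuous_id S.src_inv).congr S.inv_mul

theorem continuous_rngMap : Continuous S.rngMap := hS.continuous_rng.subtype_mk _

theorem continuous_srcMap : Continuous S.srcMap := hS.continuous_src.subtype_mk _

theorem continuous_conj {a g b : X → G} (ha : Continuous a) (hg : Continuous g)
    (hb : Continuous b) (hag : ∀ x, S.rng (a x) = S.rng (g x))
    (hbg : ∀ x, S.rng (b x) = S.src (g x)) : Continuous fun x => S.conj (a x) (g x) (b x) :=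
  hS.continuous_mul (hS.continuous_inv.comp ha) (hS.continuous_mul hg hb fun x => (hbg x).symm)
    fun x => src_inv_eq_rng_mul (hag x) (hbg x)

end IsTopologicalGroupoid

variable {G : Type u} [TopologicalSpace G]

/-- An identification of `G⁰ × ℕ` with `K × ℕ` which moves each `(x, i)` along the arrow
`arrow x`, from its source in `K` to `x`. -/
structure Transport (S : GroupoidStruct G) (K : Set G) where
  arrow : S.units → G
  continuous_arrow : Continuous arrow
  rng_arrow : ∀ x, S.rng (arrow x) = x
  equiv : S.units × ℕ ≃ₜ K × ℕ
  coe_fst_equiv : ∀ p, ((equiv p).1 : G) = S.src (arrow p.1)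

namespace Transport

variable {S : GroupoidStruct G} {K : Set G} (T : Transport S K)

theorem src_arrow_mem (x : S.units) : S.src (T.arrow x) ∈ K :=
  T.coe_fst_equiv (x, 0) ▸ (T.equiv (x, 0)).1.2

theorem src_arrow_fst_equiv_symm (q : K × ℕ) : S.src (T.arrow (T.equiv.symm q).1) = q.1 := by
  rw [← T.coe_fst_equiv, T.equiv.apply_symm_apply]

theorem equiv_symm_mk {x : S.units} {k : G} (hk : k ∈ K) (h : S.src (T.arrow x) = k) (i : ℕ) :
    T.equiv.symm (⟨k, hk⟩, (T.equiv (x, i)).2) = (x, i) := by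
  rw [Homeomorph.symm_apply_eq]
  exact Prod.ext (Subtype.ext (h.symm.trans (T.coe_fst_equiv (x, i)).symm)) rfl

def transfer (g : G) : G := S.conj (T.arrow (S.rngMap g)) g (T.arrow (S.srcMap g))

theorem rng_transfer (g : G) : S.rng (T.transfer g) = S.src (T.arrow (S.rngMap g)) :=
  rng_conj (T.rng_arrow _) (T.rng_arrow _)

theorem src_transfer (g : G) : S.src (T.transfer g) = S.src (T.arrow (S.srcMap g)) :=
  src_conj (T.rng_arrow _) (T.rng_arrow _)

theorem transfer_mul {g g' : G} (h : S.src g = S.rng g') :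
    T.transfer (S.mul g g') = S.mul (T.transfer g) (T.transfer g') := by
  rw [transfer, transfer, transfer, S.rngMap_mul h, S.srcMap_mul h, S.srcMap_eq_rngMap h,
    conj_mul_conj (T.rng_arrow _) (by rw [T.rng_arrow, ← S.srcMap_eq_rngMap h]; rfl) h
      (T.rng_arrow _)]

theorem transfer_inv (g : G) : T.transfer (S.inv g) = S.inv (T.transfer g) := by
  rw [transfer, transfer, S.rngMap_inv, S.srcMap_inv, inv_conj (T.rng_arrow _) (T.rng_arrow _)]

theorem transfer_src (g : G) : T.transfer (S.src g) = S.src (T.transfer g) := by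
  have h : S.src g = S.rng (T.arrow (S.srcMap g)) := (T.rng_arrow (S.srcMap g)).symm
  rw [transfer, S.rngMap_src, S.srcMap_src, src_transfer, h, conj_rng_self]

theorem transfer_rng (g : G) : T.transfer (S.rng g) = S.rng (T.transfer g) := by
  have h : S.rng g = S.rng (T.arrow (S.rngMap g)) := (T.rng_arrow (S.rngMap g)).symm
  rw [transfer, S.rngMap_rng, S.srcMap_rng, rng_transfer, h, conj_rng_self]

/-- `arrow x · h · (arrow y)⁻¹`. -/
def untransfer (x y : S.units) (h : G) : G := S.conj (S.inv (T.arrow x)) h (S.inv (T.arrow y))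

section Untransfer

variable {x y : S.units} {h : G} (hx : S.src (T.arrow x) = S.rng h)
  (hy : S.src (T.arrow y) = S.src h)
include hx hy

theorem rngMap_untransfer : S.rngMap (T.untransfer x y h) = x :=
  Subtype.ext <| (rng_conj (by rw [S.rng_inv, hx]) (by rw [S.rng_inv, hy])).trans <| by
    rw [S.src_inv, T.rng_arrow]

theorem srcMap_untransfer : S.srcMap (T.untransfer x y h) = y :=
  Subtype.ext <| (src_conj (by rw [S.rng_inv, hx]) (by rw [S.rng_inv, hy])).trans <| by
    rw [S.src_inv, T.rng_arrow]

theorem transfer_untransfer : T.transfer (T.untransfer x y h) = h := by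
  rw [transfer, T.rngMap_untransfer hx hy, T.srcMap_untransfer hx hy, untransfer,
    conj_conj_inv hx hy]

end Untransfer

def transferRestrict (g : G) : S.Restrict K :=
  ⟨T.transfer g, T.rng_transfer g ▸ T.src_arrow_mem _, T.src_transfer g ▸ T.src_arrow_mem _⟩

def toFun (p : G × ℕ × ℕ) : S.Restrict K × ℕ × ℕ :=
  (T.transferRestrict p.1, (T.equiv (S.rngMap p.1, p.2.1)).2, (T.equiv (S.srcMap p.1, p.2.2)).2)

def invFun (q : S.Restrict K × ℕ × ℕ) : G × ℕ × ℕ :=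
  let x := T.equiv.symm (⟨S.rng q.1.1, q.1.2.1⟩, q.2.1)
  let y := T.equiv.symm (⟨S.src q.1.1, q.1.2.2⟩, q.2.2)
  (T.untransfer x.1 y.1 q.1.1, x.2, y.2)

theorem invFun_toFun (p : G × ℕ × ℕ) : T.invFun (T.toFun p) = p := by
  obtain ⟨g, i, j⟩ := p
  simp only [invFun, toFun, transferRestrict]
  rw [T.equiv_symm_mk _ (T.rng_transfer g).symm, T.equiv_symm_mk _ (T.src_transfer g).symm,
    untransfer, transfer, conj_inv_conj (T.rng_arrow _) (T.rng_arrow _)]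

theorem toFun_invFun (q : S.Restrict K × ℕ × ℕ) : T.toFun (T.invFun q) = q := by
  obtain ⟨h, m, n⟩ := q
  have hx := T.src_arrow_fst_equiv_symm (⟨S.rng h.1, h.2.1⟩, m)
  have hy := T.src_arrow_fst_equiv_symm (⟨S.src h.1, h.2.2⟩, n)
  simp only [invFun, toFun, transferRestrict, T.rngMap_untransfer hx hy,
    T.srcMap_untransfer hx hy, T.transfer_untransfer hx hy, Prod.mk.eta,
    Homeomorph.apply_symm_apply]

section Continuity

variable (hS : S.IsTopologicalGroupoid)
include hS

theorem continuous_transfer : Continuous T.transfer :=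
  hS.continuous_conj (T.continuous_arrow.comp hS.continuous_rngMap) continuous_id
    (T.continuous_arrow.comp hS.continuous_srcMap) (fun _ => T.rng_arrow _)
    (fun _ => T.rng_arrow _)

theorem continuous_toFun : Continuous T.toFun := by
  have level {f : G → S.units} (hf : Continuous f) {n : ℕ × ℕ → ℕ} (hn : Continuous n) :
      Continuous fun p : G × ℕ × ℕ => (T.equiv (f p.1, n p.2)).2 :=
    (T.equiv.continuous.comp ((hf.comp continuous_fst).prodMk (hn.comp continuous_snd))).snd
  exact ((T.continuous_transfer hS).comp continuous_fst).subtype_mk _ |>.prodMk <|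
    (level hS.continuous_rngMap continuous_fst).prodMk (level hS.continuous_srcMap continuous_snd)

theorem continuous_invFun : Continuous T.invFun := by
  have hval : Continuous fun q : S.Restrict K × ℕ × ℕ => q.1.1 :=
    continuous_subtype_val.comp continuous_fst
  have point {f : G → G} (hf : Continuous f) (hfK : ∀ h : S.Restrict K, f h.1 ∈ K)
      {n : ℕ × ℕ → ℕ} (hn : Continuous n) :
      Continuous fun q : S.Restrict K × ℕ × ℕ => T.equiv.symm (⟨f q.1.1, hfK q.1⟩, n q.2) :=
    T.equiv.symm.continuous.comp (((hf.comp hval).subtype_mk _).prodMk (hn.comp continuous_snd))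
  have hx := point hS.continuous_rng (fun h => h.2.1) continuous_fst
  have hy := point hS.continuous_src (fun h => h.2.2) continuous_snd
  refine .prodMk ?_ (hx.snd.prodMk hy.snd)
  exact hS.continuous_conj (hS.continuous_inv.comp (T.continuous_arrow.comp hx.fst)) hval
    (hS.continuous_inv.comp (T.continuous_arrow.comp hy.fst))
    (fun q => by rw [S.rng_inv, T.src_arrow_fst_equiv_symm])
    (fun q => by rw [S.rng_inv, T.src_arrow_fst_equiv_symm])

end Continuity

theorem toFun_mul {a b : G × ℕ × ℕ} (hab : (S.prod Rho).src a = (S.prod Rho).rng b) :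
    T.toFun ((S.prod Rho).mul a b) = ((S.restrict K).prod Rho).mul (T.toFun a) (T.toFun b) := by
  obtain ⟨g, i, j⟩ := a
  obtain ⟨g', j', k⟩ := b
  have h : S.src g = S.rng g' := congrArg Prod.fst hab
  have hcomp : S.src (T.transfer g) = S.rng (T.transfer g') := by
    rw [src_transfer, rng_transfer, S.srcMap_eq_rngMap h]
  refine Prod.ext (Subtype.ext ?_) (Prod.ext ?_ ?_)
  · show T.transfer (S.mul g g') = (S.rmul K _ _).1
    rw [S.rmul_val K _ _ hcomp, T.transfer_mul h]
    rfl
  · show (T.equiv (S.rngMap (S.mul g g'), i)).2 = (T.equiv (S.rngMap g, i)).2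
    rw [S.rngMap_mul h]
  · show (T.equiv (S.srcMap (S.mul g g'), k)).2 = (T.equiv (S.srcMap g', k)).2
    rw [S.srcMap_mul h]

theorem toFun_inv (a : G × ℕ × ℕ) :
    T.toFun ((S.prod Rho).inv a) = ((S.restrict K).prod Rho).inv (T.toFun a) := by
  obtain ⟨g, i, j⟩ := a
  refine Prod.ext (Subtype.ext (T.transfer_inv g)) (Prod.ext ?_ ?_)
  · show (T.equiv (S.rngMap (S.inv g), j)).2 = (T.equiv (S.srcMap g, j)).2
    rw [S.rngMap_inv]
  · show (T.equiv (S.srcMap (S.inv g), i)).2 = (T.equiv (S.rngMap g, i)).2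
    rw [S.srcMap_inv]

theorem toFun_src (a : G × ℕ × ℕ) :
    T.toFun ((S.prod Rho).src a) = ((S.restrict K).prod Rho).src (T.toFun a) := by
  obtain ⟨g, i, j⟩ := a
  refine Prod.ext (Subtype.ext (T.transfer_src g)) (Prod.ext ?_ ?_)
  · show (T.equiv (S.rngMap (S.src g), j)).2 = (T.equiv (S.srcMap g, j)).2
    rw [S.rngMap_src]
  · show (T.equiv (S.srcMap (S.src g), j)).2 = (T.equiv (S.srcMap g, j)).2
    rw [S.srcMap_src]

theorem toFun_rng (a : G × ℕ × ℕ) :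
    T.toFun ((S.prod Rho).rng a) = ((S.restrict K).prod Rho).rng (T.toFun a) := by
  obtain ⟨g, i, j⟩ := a
  refine Prod.ext (Subtype.ext (T.transfer_rng g)) (Prod.ext ?_ ?_)
  · show (T.equiv (S.rngMap (S.rng g), i)).2 = (T.equiv (S.rngMap g, i)).2
    rw [S.rngMap_rng]
  · show (T.equiv (S.srcMap (S.rng g), i)).2 = (T.equiv (S.rngMap g, i)).2
    rw [S.srcMap_rng]

def groupoidIso (hS : S.IsTopologicalGroupoid) :
    GroupoidIso (S.prod Rho) ((S.restrict K).prod Rho) where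
  toFun := T.toFun
  invFun := T.invFun
  left_inv := T.invFun_toFun
  right_inv := T.toFun_invFun
  continuous_toFun := T.continuous_toFun hS
  continuous_invFun := T.continuous_invFun hS
  map_mul _ _ := T.toFun_mul
  map_inv := T.toFun_inv
  map_src := T.toFun_src
  map_rng := T.toFun_rng

end Transport

variable {S : GroupoidStruct G} {K : Set G}

/-- Plays the role of an open bisection `U` with `s(U) ⊆ K` and clopen `r(U) = V` and `s(U)`:
`arrow` inverts `r` on `U`, and `back` inverts `s ∘ arrow`. -/
structure LocalTransport (S : GroupoidStruct G) (K : Set G) where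
  V : Set S.units
  arrow : S.units → G
  back : S.units → S.units
  isClopen_V : IsClopen V
  continuousOn_arrow : ContinuousOn arrow V
  rng_arrow : ∀ x ∈ V, S.rng (arrow x) = x
  src_arrow_mem : ∀ x ∈ V, S.src (arrow x) ∈ K
  isClopen_image : IsClopen ((fun x => S.srcMap (arrow x)) '' V)
  continuousOn_back : ContinuousOn back ((fun x => S.srcMap (arrow x)) '' V)
  back_srcMap_arrow : ∀ x ∈ V, back (S.srcMap (arrow x)) = x

namespace LocalTransport

def ofUnitClopen (hK : S.IsUnitClopen K) : LocalTransport S K where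
  V := {x | x.1 ∈ K}
  arrow := Subtype.val
  back := id
  isClopen_V := hK.2
  continuousOn_arrow := continuous_subtype_val.continuousOn
  rng_arrow x _ := x.2.2
  src_arrow_mem x hx := x.2.1.symm ▸ hx
  isClopen_image := by
    rw [show (fun x : S.units => S.srcMap x.1) = id from funext fun x => Subtype.ext x.2.1,
      Set.image_id]
    exact hK.2
  continuousOn_back := continuousOn_id
  back_srcMap_arrow x _ := Subtype.ext x.2.1

variable (T : LocalTransport S K)

theorem isClopen_image_of_subset {A : Set S.units} (hA : IsClopen A) (hAV : A ⊆ T.V) :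
    IsClopen ((fun x => S.srcMap (T.arrow x)) '' A) := by
  have : (fun x => S.srcMap (T.arrow x)) '' A =
      (fun x => S.srcMap (T.arrow x)) '' T.V ∩ T.back ⁻¹' A := by
    ext y
    constructor
    · rintro ⟨x, hx, rfl⟩
      refine ⟨⟨x, hAV hx, rfl⟩, ?_⟩
      rw [Set.mem_preimage, T.back_srcMap_arrow x (hAV hx)]
      exact hx
    · rintro ⟨⟨x, hx, rfl⟩, hback⟩
      exact ⟨x, T.back_srcMap_arrow x hx ▸ hback, rfl⟩
  rw [this]
  exact ⟨T.continuousOn_back.preimage_isClosed_of_isClosed T.isClopen_image.1 hA.1,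
    T.continuousOn_back.isOpen_inter_preimage T.isClopen_image.2 hA.2⟩

def ofPartialHomeomorph [T2Space S.units] (hr : Continuous S.rngMap)
    (e f : OpenPartialHomeomorph G S.units) (he : S.rngMap = e) (hf : S.srcMap = f) {B : Set G}
    (hBc : IsCompact B) (hBo : IsOpen B) (hBe : B ⊆ e.source) (hBf : B ⊆ f.source)
    (hBK : ∀ b ∈ B, S.src b ∈ K) : LocalTransport S K where
  V := e '' B
  arrow := e.symm
  back y := S.rngMap (f.symm y)
  isClopen_V := e.isClopen_image_of_isCompact hBc hBo hBe
  continuousOn_arrow := e.symm.continuousOn.mono <| by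
    rintro _ ⟨b, hb, rfl⟩
    exact e.map_source (hBe hb)
  rng_arrow := by
    rintro _ ⟨b, hb, rfl⟩
    rw [e.left_inv (hBe hb), ← he]
    rfl
  src_arrow_mem := by
    rintro _ ⟨b, hb, rfl⟩
    rw [e.left_inv (hBe hb)]
    exact hBK b hb
  isClopen_image := by
    rw [Set.image_image, Set.image_congr fun b hb => by rw [e.left_inv (hBe hb), hf]]
    exact f.isClopen_image_of_isCompact hBc hBo hBf
  continuousOn_back := (hr.comp_continuousOn f.symm.continuousOn).mono <| by
    rintro _ ⟨_, ⟨b, hb, rfl⟩, rfl⟩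
    dsimp only
    rw [e.left_inv (hBe hb), hf]
    exact f.map_source (hBf hb)
  back_srcMap_arrow := by
    rintro _ ⟨b, hb, rfl⟩
    rw [e.left_inv (hBe hb), hf, f.left_inv (hBf hb), he]

theorem exists_mem_V (hS : S.IsAmple) (hK : S.IsUnitClopen K) {g : G} (hg : S.src g ∈ K) :
    ∃ T : LocalTransport S K, S.rngMap g ∈ T.V := by
  have := hS.t2_units
  obtain ⟨e, hge, he⟩ := hS.isLocalHomeomorph_rngMap g
  obtain ⟨f, hgf, hf⟩ := hS.isLocalHomeomorph_srcMap g
  obtain ⟨𝓑, h𝓑, hbasis⟩ := hS.compact_open_basis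
  have hopen : IsOpen (e.source ∩ f.source ∩ S.srcMap ⁻¹' {x | x.1 ∈ K}) :=
    (e.open_source.inter f.open_source).inter (hK.2.isOpen.preimage hS.continuous_srcMap)
  have hgU : g ∈ e.source ∩ f.source ∩ S.srcMap ⁻¹' {x | x.1 ∈ K} := ⟨⟨hge, hgf⟩, hg⟩
  obtain ⟨B, hB𝓑, hgB, hBsub⟩ := hbasis.exists_subset_of_mem_open hgU hopen
  refine ⟨ofPartialHomeomorph hS.continuous_rngMap e f he hf (h𝓑 B hB𝓑).1 (h𝓑 B hB𝓑).2
    (fun b hb => (hBsub hb).1.1) (fun b hb => (hBsub hb).1.2) (fun b hb => (hBsub hb).2), ?_⟩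
  exact ⟨g, hgB, he ▸ rfl⟩

end LocalTransport

theorem exists_seq_localTransport (hS : S.IsAmple) (hc : IsSigmaCompact S.units)
    (hK : S.IsUnitClopen K) (hKf : S.IsFull K) :
    ∃ t : ℕ → LocalTransport S K, ∀ x, ∃ n, x ∈ (t n).V := by
  have hpoint (x : S.units) : ∃ T : LocalTransport S K, x ∈ T.V := by
    obtain ⟨g, hg, hgx⟩ : x.1 ∈ S.rng '' (S.src ⁻¹' K) := by rw [hKf]; exact x.2
    obtain ⟨T, hT⟩ := LocalTransport.exists_mem_V hS hK hg
    have hgx : S.rngMap g = x := Subtype.ext hgx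
    exact ⟨T, hgx ▸ hT⟩
  choose T hT using hpoint
  have := isSigmaCompact_iff_sigmaCompactSpace.1 hc
  obtain ⟨r, hr, hcover⟩ := isLindelof_univ.elim_countable_subcover (fun x => (T x).V)
    (fun x => (T x).isClopen_V.isOpen) fun x _ => Set.mem_iUnion.2 ⟨x, hT x⟩
  have : Nonempty (LocalTransport S K) := ⟨.ofUnitClopen hK⟩
  obtain ⟨t, ht⟩ := Set.countable_iff_exists_subset_range.1 (hr.image T)
  refine ⟨t, fun x => ?_⟩
  obtain ⟨y, hy, hxy⟩ := Set.mem_iUnion₂.1 (hcover (Set.mem_univ x))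
  obtain ⟨n, hn⟩ := ht (Set.mem_image_of_mem T hy)
  exact ⟨n, hn ▸ hxy⟩

namespace LocalTransport

variable (t : ℕ → LocalTransport S K) (ht : ∀ x, ∃ n, x ∈ (t n).V)

open Classical in
noncomputable def index (x : S.units) : ℕ := Nat.find (ht x)

open Classical in
theorem mem_V_index (x : S.units) : x ∈ (t (index t ht x)).V := Nat.find_spec (ht x)

theorem continuous_index : Continuous (index t ht) :=
  continuous_find_of_isClopen (fun n => (t n).isClopen_V) ht

theorem index_eq_zero_iff {hK : S.IsUnitClopen K} (ht0 : t 0 = .ofUnitClopen hK) (x : S.units) :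
    index t ht x = 0 ↔ x.1 ∈ K := by
  classical
  rw [index, Nat.find_eq_zero, ht0]
  rfl

noncomputable def gluedArrow (x : S.units) : G := (t (index t ht x)).arrow x

theorem gluedArrow_eq {x : S.units} {m : ℕ} (hx : index t ht x = m) :
    gluedArrow t ht x = (t m).arrow x := by
  rw [gluedArrow, hx]

theorem continuous_gluedArrow : Continuous (gluedArrow t ht) :=
  continuous_of_continuousOn_fibers (continuous_index t ht) fun m =>
    (t m).continuousOn_arrow.mono fun x (hx : index t ht x = m) => hx ▸ mem_V_index t ht x

end LocalTransport

open LocalTransport in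
theorem Transport.nonempty_of_seq (hS : S.IsTopologicalGroupoid) (hK : S.IsUnitClopen K)
    (t : ℕ → LocalTransport S K) (ht0 : t 0 = .ofUnitClopen hK) (ht : ∀ x, ∃ n, x ∈ (t n).V) :
    Nonempty (Transport S K) := by
  let κ : S.units → K := fun x =>
    ⟨S.src (gluedArrow t ht x), (t _).src_arrow_mem x (mem_V_index t ht x)⟩
  let incl : K → S.units := fun y => ⟨y.1, hK.1 y.2⟩
  have hincl : Continuous incl := continuous_subtype_val.subtype_mk _
  have hfiber (m : ℕ) : κ '' {x | index t ht x = m} =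
      incl ⁻¹' ((fun x => S.srcMap ((t m).arrow x)) '' {x | index t ht x = m}) := by
    ext y
    constructor
    · rintro ⟨x, hx, rfl⟩
      exact ⟨x, hx, Subtype.ext (congrArg S.src (gluedArrow_eq t ht hx)).symm⟩
    · rintro ⟨x, hx, hxy⟩
      exact ⟨x, hx, Subtype.ext <|
        (congrArg S.src (gluedArrow_eq t ht hx)).trans (congrArg Subtype.val hxy)⟩
  obtain ⟨e, he⟩ := exists_homeomorph_prod_nat (κ := κ) (ψ := fun m y => (t m).back (incl y))
    (continuous_index t ht) ((hS.continuous_src.comp (continuous_gluedArrow t ht)).subtype_mk _)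
    (fun m => by
      rw [hfiber]
      exact ((t m).isClopen_image_of_subset ((isClopen_discrete {m}).preimage
        (continuous_index t ht)) fun x (hx : index t ht x = m) => hx ▸ mem_V_index t ht x).preimage
        hincl)
    (fun x => (t _).back_srcMap_arrow x (mem_V_index t ht x))
    (fun m => (t m).continuousOn_back.comp hincl.continuousOn <| by
      rintro _ ⟨x, hx, rfl⟩
      exact ⟨x, hx ▸ mem_V_index t ht x,
        Subtype.ext (congrArg S.src (gluedArrow_eq t ht hx)).symm⟩)
    (fun y => ⟨incl y, (index_eq_zero_iff t ht ht0 _).2 y.2, Subtype.ext <| by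
      show S.src (gluedArrow t ht (incl y)) = y
      rw [gluedArrow_eq t ht ((index_eq_zero_iff t ht ht0 _).2 y.2), ht0]
      exact (hK.1 y.2).1⟩)
  exact ⟨⟨gluedArrow t ht, continuous_gluedArrow t ht,
    fun x => (t _).rng_arrow x (mem_V_index t ht x), e, fun p => by rw [he]⟩⟩

end GroupoidStruct

open GroupoidStruct in
/-- For an ample groupoid with σ-compact unit space and a clopen `G`-full `K ⊆ G⁰`,
`G × ℛ ≅ G|_K × ℛ` as topological groupoids. -/
theorem prod_Rho_iso_restrict_prod_Rho
    {G : Type u} [TopologicalSpace G] (S : GroupoidStruct G)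
    (hS : S.IsAmple) (hc : IsSigmaCompact S.units)
    {K : Set G} (hK : S.IsUnitClopen K) (hKf : S.IsFull K) :
    Nonempty (GroupoidIso (S.prod Rho) ((S.restrict K).prod Rho)) := by
  obtain ⟨t, ht⟩ := exists_seq_localTransport hS hc hK hKf
  obtain ⟨T⟩ := Transport.nonempty_of_seq hS.toIsTopologicalGroupoid hK
    (fun n => Nat.casesOn n (.ofUnitClopen hK) t) rfl fun x =>
      (ht x).elim fun n hn => ⟨n + 1, hn⟩
  exact ⟨T.groupoidIso hS.toIsTopologicalGroupoid⟩
end
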